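/- arXiv:1608.02682 — 2 statements merged into one kernel-verified Lean document; each statement's English description precedes it below -/
import Mathlib

section
/- (Correctness of lattice compaction.) Let P be a duplicate-free list of variables with element set U, and let x ∉ U be a variable such that U is a superset of an optimal parents set of x, i.e. d(x, U) = d(x, univ \ {x}). Then the minimum of Q(L) over all duplicate-free enumerations L of all variables having prefix P equals the minimum of Q(L) over all duplicate-free enumerations L of all variables having prefix P ++ [x]. In other words, deleting from the dynamic programming lattice all outgoing edges of U other than the edge to U ∪ {x} does not change the shortest-path value through U. -/
/-!
Take a complete ordering `P ++ A ++ x :: B` and move `x` forward to sit right after `P`.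
Since `P` already contains an optimal parent set of `x`, the cost of `x` does not increase;
the variables of `A` gain `x` as a potential parent, so their costs do not increase either;
the costs of `P` and `B` are unchanged. Hence every completion of `P` is dominated by a
completion of `P ++ [x]`, and the two minima agree.
-/

/-- `d s x U` : the score of selecting optimal parents of `x` from `U`,
defined as the minimum of `s x W` over all subsets `W ⊆ U`. -/
noncomputable def d {X : Type*} [DecidableEq X] (s : X → Finset X → ℝ)
    (x : X) (U : Finset X) : ℝ :=
  U.powerset.inf' (Finset.powerset_nonempty U) (s x)

/-- `Qfrom s M U` : the cost of extending the lattice node `U` along the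
ordering `M`, i.e. `Σ_k d(M_k, U ∪ S_k)` where `S_k` is the set of entries
of `M` preceding position `k`. -/
noncomputable def Qfrom {X : Type*} [DecidableEq X] (s : X → Finset X → ℝ) :
    List X → Finset X → ℝ
  | [], _ => 0
  | x :: M, U => d s x U + Qfrom s M (insert x U)

/-- `Q s L` : the cost of the ordering `L`, i.e. `Σ_k d(L_k, S_k)` where
`S_k` is the set of entries of `L` preceding position `k`; this is the score
of the network in which each variable's parents are chosen optimally from
its predecessors in `L`. -/
noncomputable def Q {X : Type*} [DecidableEq X] (s : X → Finset X → ℝ)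
    (L : List X) : ℝ :=
  Qfrom s L ∅

section Score

variable {X : Type*} [DecidableEq X] (s : X → Finset X → ℝ)

theorem d_anti (x : X) {U V : Finset X} (h : U ⊆ V) : d s x V ≤ d s x U :=
  Finset.inf'_mono (s x) (Finset.powerset_mono.mpr h) _

theorem d_le_of_eq_d_sdiff [Fintype X] {x : X} {U V : Finset X}
    (hopt : d s x U = d s x (Finset.univ \ {x})) (hV : x ∉ V) : d s x U ≤ d s x V :=
  hopt ▸ d_anti s x fun y hy => Finset.mem_sdiff.mpr
    ⟨Finset.mem_univ y, Finset.notMem_singleton.mpr fun h => hV (h ▸ hy)⟩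

theorem Qfrom_anti (A : List X) {U V : Finset X} (h : U ⊆ V) :
    Qfrom s A V ≤ Qfrom s A U := by
  induction A generalizing U V with
  | nil => exact le_rfl
  | cons a A ih => exact add_le_add (d_anti s a h) (ih (Finset.insert_subset_insert a h))

theorem Qfrom_append (A B : List X) (U : Finset X) :
    Qfrom s (A ++ B) U = Qfrom s A U + Qfrom s B (U ∪ A.toFinset) := by
  induction A generalizing U with
  | nil => simp [Qfrom]
  | cons a A ih =>
    rw [List.cons_append, Qfrom, Qfrom, ih, add_assoc, List.toFinset_cons,
      Finset.union_insert, Finset.insert_union]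

theorem Q_append (P M : List X) : Q s (P ++ M) = Q s P + Qfrom s M P.toFinset := by
  rw [Q, Qfrom_append, Finset.empty_union, Q]

theorem Qfrom_cons_append_le {x : X} {U : Finset X} {A : List X} (B : List X)
    (hx : d s x U ≤ d s x (U ∪ A.toFinset)) :
    Qfrom s (x :: (A ++ B)) U ≤ Qfrom s (A ++ x :: B) U := by
  rw [Qfrom, Qfrom_append, Qfrom_append, Qfrom, ← Finset.insert_union]
  linarith [Qfrom_anti s A (Finset.subset_insert x U)]

end Score

section Completions

variable {X : Type*} [DecidableEq X] (s : X → Finset X → ℝ)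

def completionCosts (P : List X) : Set ℝ :=
  {r | ∃ L : List X, L.Nodup ∧ (∀ z, z ∈ L) ∧ P <+: L ∧ Q s L = r}

theorem completionCosts_anti {P P' : List X} (h : P <+: P') :
    completionCosts s P' ⊆ completionCosts s P := by
  rintro r ⟨L, hnd, hfull, hpre, hQ⟩
  exact ⟨L, hnd, hfull, h.trans hpre, hQ⟩

variable [Fintype X]

theorem completionCosts_nonempty {P : List X} (hP : P.Nodup) :
    (completionCosts s P).Nonempty := by
  refine ⟨_, P ++ (Finset.univ \ P.toFinset).toList, ?_, fun z => ?_, List.prefix_append _ _, rfl⟩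
  · refine hP.append (Finset.nodup_toList _) fun a ha hb => ?_
    rw [Finset.mem_toList, Finset.mem_sdiff] at hb
    exact hb.2 (List.mem_toFinset.mpr ha)
  · by_cases hz : z ∈ P <;> simp [hz]

theorem completionCosts_finite (P : List X) : (completionCosts s P).Finite :=
  ((List.finite_length_le X (Fintype.card X)).image (Q s)).subset
    fun _ ⟨L, hnd, _, _, hQ⟩ => ⟨L, hnd.length_le_card, hQ⟩

theorem exists_completionCosts_append_singleton_le {P : List X} {x : X}
    (hx : x ∉ P.toFinset) (hopt : d s x P.toFinset = d s x (Finset.univ \ {x}))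
    {r : ℝ} (hr : r ∈ completionCosts s P) :
    ∃ r' ∈ completionCosts s (P ++ [x]), r' ≤ r := by
  obtain ⟨L, hnd, hfull, ⟨M, rfl⟩, rfl⟩ := hr
  have hxM : x ∈ M := (List.mem_append.mp (hfull x)).resolve_left (hx ∘ List.mem_toFinset.mpr)
  obtain ⟨A, B, rfl⟩ := List.append_of_mem hxM
  have hperm : (P ++ x :: (A ++ B)).Perm (P ++ (A ++ x :: B)) :=
    List.perm_middle.symm.append_left P
  have hxA : x ∉ A := fun h =>
    (List.nodup_cons.mp (List.nodup_middle.mp hnd.of_append_right)).1 (List.mem_append_left B h)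
  have hxPA : x ∉ P.toFinset ∪ A.toFinset := by
    simpa [not_or] using ⟨List.mem_toFinset.not.mp hx, hxA⟩
  refine ⟨_, ⟨_, hperm.nodup_iff.mpr hnd, fun z => hperm.mem_iff.mpr (hfull z),
    ⟨A ++ B, by simp⟩, rfl⟩, ?_⟩
  rw [Q_append, Q_append, add_le_add_iff_left]
  exact Qfrom_cons_append_le s B (d_le_of_eq_d_sdiff s hopt hxPA)

end Completions

theorem lattice_compaction_correct_general
    {X : Type*} [Fintype X] [DecidableEq X]
    (s : X → Finset X → ℝ) (P : List X) (x : X)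
    (hP : P.Nodup)
    (hx : x ∉ P.toFinset)
    (hopt : d s x P.toFinset = d s x (Finset.univ \ {x})) :
    sInf {r : ℝ | ∃ L : List X, L.Nodup ∧ (∀ z : X, z ∈ L) ∧
        P <+: L ∧ Q s L = r} =
    sInf {r : ℝ | ∃ L : List X, L.Nodup ∧ (∀ z : X, z ∈ L) ∧
        (P ++ [x]) <+: L ∧ Q s L = r} := by
  show sInf (completionCosts s P) = sInf (completionCosts s (P ++ [x]))
  have hPx : (P ++ [x]).Nodup :=
    hP.append (List.nodup_singleton x) (by simpa using List.mem_toFinset.not.mp hx)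
  have hsub := completionCosts_anti s (List.prefix_append P [x])
  have hne := completionCosts_nonempty s hPx
  refine le_antisymm
    (csInf_le_csInf (completionCosts_finite s P).bddBelow hne hsub)
    (le_csInf (hne.mono hsub) fun r hr => ?_)
  obtain ⟨r', hr', hle⟩ := exists_completionCosts_append_singleton_le s hx hopt hr
  exact (csInf_le (completionCosts_finite s _).bddBelow hr').trans hle

/-- Correctness of lattice compaction: if the prefix set `U = P.toFinset` is
a superset of an optimal parents set of `x`, then the minimum of `Q` over
all duplicate-free enumerations of all variables with prefix `P` equals the
minimum over those with prefix `P ++ [x]`. -/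
theorem lattice_compaction_correct
    {X : Type*} [Fintype X] [DecidableEq X] [Nonempty X]
    (s : X → Finset X → ℝ) (P : List X) (x : X)
    (hP : P.Nodup)
    (hx : x ∉ P.toFinset)
    (hopt : d s x P.toFinset = d s x (Finset.univ \ {x})) :
    sInf {r : ℝ | ∃ L : List X, L.Nodup ∧ (∀ z : X, z ∈ L) ∧
        P <+: L ∧ Q s L = r} =
    sInf {r : ℝ | ∃ L : List X, L.Nodup ∧ (∀ z : X, z ∈ L) ∧
        (P ++ [x]) <+: L ∧ Q s L = r} :=
  lattice_compaction_correct_general s P x hP hx hopt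
end

section
/- (Consistency of the A-star heuristic.) Define h(U) = Σ over x ∉ U of d(x, univ \ {x}). Then for every finite set U of variables and every x ∉ U, the heuristic is consistent along the lattice edge from U to U ∪ {x}: h(U) ≤ d(x, U) + h(U ∪ {x}). -/
theorem d_antitone {X : Type*} [DecidableEq X] (s : X → Finset X → ℝ) (x : X) :
    Antitone (d s x) := fun _ _ hUV =>
  Finset.le_inf' _ _ fun _ hW => Finset.inf'_le _ <|
    Finset.mem_powerset.2 <| (Finset.mem_powerset.1 hW).trans hUV

theorem astar_heuristic_consistent_general
    {X : Type*} [Fintype X] [DecidableEq X]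
    (s : X → Finset X → ℝ) (U : Finset X) (x : X) (hx : x ∉ U) :
    (∑ y ∈ Finset.univ \ U, d s y (Finset.univ \ {y})) ≤
      d s x U + ∑ y ∈ Finset.univ \ insert x U, d s y (Finset.univ \ {y}) := by
  have hxU : x ∈ Finset.univ \ U := by simpa using hx
  have hU : U ⊆ Finset.univ \ {x} := fun y hy => by
    simpa using ne_of_mem_of_not_mem hy hx
  rw [Finset.sdiff_insert, ← Finset.add_sum_erase _ _ hxU]
  gcongr
  exact d_antitone s x hU

/-- Consistency of the A-star heuristic `h(U) = Σ_{x ∉ U} d(x, univ \ {x})`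
along the lattice edge from `U` to `U ∪ {x}`:
`h(U) ≤ d(x, U) + h(U ∪ {x})`. -/
theorem astar_heuristic_consistent
    {X : Type*} [Fintype X] [DecidableEq X] [Nonempty X]
    (s : X → Finset X → ℝ) (U : Finset X) (x : X) (hx : x ∉ U) :
    (∑ y ∈ Finset.univ \ U, d s y (Finset.univ \ {y})) ≤
      d s x U + ∑ y ∈ Finset.univ \ insert x U, d s y (Finset.univ \ {y}) :=
  astar_heuristic_consistent_general s U x hx
end
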